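/- Suppose Condition [A1] holds with exponent L, and let 1 ≤ p < L (and p > q ∨ 1 for a given q > 0). Then for every 𝒯 ∈ 𝔗 the conditional moments of the scaled QMLE error are bounded under truncation: almost surely, for all T ∈ 𝒯, E_𝓒[|û_T|^p Ψ_T] ≤ 1 + p Σ_{r=1}^∞ (r+1)^{p−1} (1_{{ε(r)>1}} + V_L r^{−L}) =: V, where V_L is a 𝓒-measurable random variable bounding sup_{T∈𝒯} sup_{r} r^L P_𝓒[S_T(r,ε(r))]Ψ_T and V is an almost surely finite random variable (since L > p). -/

import Mathlib

open MeasureTheory Filter Topology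

noncomputable section

set_option maxHeartbeats 1000000
set_option synthInstance.maxHeartbeats 1000000

/-- `ℝ^𝗉` as a Euclidean space. -/
abbrev Epar (p : ℕ) := EuclideanSpace ℝ (Fin p)

/-- Borel σ-field on `Ĉ = C₀(ℝ^𝗉, ℝ)`. -/
noncomputable instance (p : ℕ) :
    MeasurableSpace (ZeroAtInftyContinuousMap (Epar p) ℝ) := borel _

/-- `𝔗`: sequences in `𝕋` bounded below by `T₀` and diverging to `∞`. -/
def IsTScheme (𝕋 : Set ℝ) (T₀ : ℝ) (s : ℕ → ℝ) : Prop :=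
  (∀ n, s n ∈ 𝕋) ∧ (∀ n, T₀ ≤ s n) ∧ Tendsto s atTop atTop

/-- Conditional probability of an event given a sub-σ-field (a version of it). -/
def condProb {Ω : Type*} [MeasurableSpace Ω] (P : Measure Ω)
    (m : MeasurableSpace Ω) (A : Set Ω) : Ω → ℝ :=
  P[A.indicator (fun _ : Ω => (1 : ℝ)) | m]

/-- The event `S_T(r, ε) = { sup_{u ∈ 𝕍_T(r)} ℤ_T(u) ≥ ε }`, where the threshold `ε` is allowed
to be a (𝓒-measurable) random variable. -/
def Sevent {Ω : Type*} {p : ℕ} (Θ : Set (Epar p)) (θs : Epar p)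
    (a : ℝ → (Epar p ≃L[ℝ] Epar p))
    (Z : ℝ → Ω → ZeroAtInftyContinuousMap (Epar p) ℝ)
    (T : ℝ) (r : ℕ) (ε : Ω → ℝ) : Set Ω :=
  {ω | ε ω ≤ ⨆ u : {u : Epar p // θs + a T u ∈ Θ ∧ (r : ℝ) ≤ ‖u‖}, Z T ω u}

/-- The event `W_T(δ, c, ε) = { w_T(δ, c) > ε }` where `w_T(δ,c)` is the modulus of continuity
of `log ℤ_T` on `B_{c,T}`. -/
def Wevent {Ω : Type*} {p : ℕ} (Θ : Set (Epar p)) (θs : Epar p)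
    (a : ℝ → (Epar p ≃L[ℝ] Epar p))
    (Z : ℝ → Ω → ZeroAtInftyContinuousMap (Epar p) ℝ)
    (T : ℝ) (δ c ε : ℝ) : Set Ω :=
  {ω | ε < ⨆ q : {q : (Epar p) × (Epar p) //
        (‖q.1‖ < c ∧ θs + a T q.1 ∈ Θ) ∧ (‖q.2‖ < c ∧ θs + a T q.2 ∈ Θ) ∧ ‖q.2 - q.1‖ ≤ δ},
      |Real.log (Z T ω (q : (Epar p) × (Epar p)).2) - Real.log (Z T ω (q : (Epar p) × (Epar p)).1)|}

/-! ### Auxiliary lemmas -/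

/-- Bernoulli-type step inequality. -/
lemma aux_mvt {m pp : ℝ} (hm : 0 ≤ m) (hp : 1 ≤ pp) :
    (m+1)^pp - m^pp ≤ pp * (m+1)^(pp-1) := by
  have h1 : (0:ℝ) < m + 1 := by linarith
  set s : ℝ := -(1/(m+1)) with hs
  have hd : 1/(m+1) ≤ 1 := by rw [div_le_one h1]; linarith
  have hs1 : -1 ≤ s := by rw [hs]; linarith
  have h1s : 0 ≤ 1 + s := by rw [hs]; linarith
  have hbern : 1 + pp * s ≤ (1+s)^pp := one_add_mul_self_le_rpow_one_add hs1 hp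
  have hm_eq : (m+1)*(1+s) = m := by rw [hs]; field_simp; ring
  have key : (m+1)^pp * (1+s)^pp = m^pp := by
    rw [← Real.mul_rpow h1.le h1s, hm_eq]
  have hB : (m+1)^pp = (m+1)^(pp-1) * (m+1) := by
    rw [← Real.rpow_add_one h1.ne' (pp-1)]; ring_nf
  have hA : (0:ℝ) < (m+1)^pp := Real.rpow_pos_of_pos h1 pp
  have h2 : (m+1)^pp * (1+pp*s) ≤ m^pp := by
    calc (m+1)^pp * (1+pp*s) ≤ (m+1)^pp * (1+s)^pp :=
          mul_le_mul_of_nonneg_left hbern hA.le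
      _ = m^pp := key
  have hAs : (m+1)^pp * s = -((m+1)^(pp-1)) := by
    rw [hB, hs]; field_simp
  have h2' : (m+1)^pp + pp * ((m+1)^pp * s) ≤ m^pp := by
    calc (m+1)^pp + pp * ((m+1)^pp * s) = (m+1)^pp * (1+pp*s) := by ring
      _ ≤ m^pp := h2
  rw [hAs] at h2'
  linarith

/-- Discrete layer-cake bound. -/
lemma aux_layer {pp : ℝ} (hp : 1 ≤ pp) (y : ℝ) (M : ℕ) (hy0 : 0 ≤ y) (hyM : y ≤ M) :
    y ^ pp ≤ 1 + ∑ m ∈ Finset.Icc 1 M,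
      (if (m:ℝ) < y then pp * ((m:ℝ)+1)^(pp-1) else 0) := by
  have hnn : ∀ m ∈ Finset.Icc 1 M,
      0 ≤ (if (m:ℝ) < y then pp * ((m:ℝ)+1)^(pp-1) else 0) := by
    intro m _
    split
    · positivity
    · exact le_rfl
  by_cases hy1 : y ≤ 1
  · have h1 : y ^ pp ≤ 1 := Real.rpow_le_one hy0 hy1 (by linarith)
    have h0 : 0 ≤ ∑ m ∈ Finset.Icc 1 M,
        (if (m:ℝ) < y then pp * ((m:ℝ)+1)^(pp-1) else 0) := Finset.sum_nonneg hnn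
    linarith
  push_neg at hy1
  set k : ℕ := ⌈y⌉₊ with hkdef
  have hyk : y ≤ (k:ℝ) := Nat.le_ceil y
  have hkM : k ≤ M := Nat.ceil_le.mpr hyM
  have hk1 : 1 ≤ k := Nat.one_le_ceil_iff.mpr (by linarith)
  have step1 : y ^ pp ≤ (k:ℝ) ^ pp := Real.rpow_le_rpow hy0 hyk (by linarith)
  have hcast : ((k-1:ℕ):ℝ) = (k:ℝ) - 1 := by
    rw [Nat.cast_sub hk1]; norm_num
  have tele : ∑ i ∈ Finset.range (k-1), (((i:ℝ)+2)^pp - ((i:ℝ)+1)^pp) = (k:ℝ)^pp - 1 := by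
    have h := Finset.sum_range_sub (f := fun i => ((i:ℝ)+1)^pp) (n := k-1)
    have h2 : ∑ i ∈ Finset.range (k-1), (((i:ℝ)+2)^pp - ((i:ℝ)+1)^pp)
        = (((k-1:ℕ):ℝ)+1)^pp - (((0:ℕ):ℝ)+1)^pp := by
      rw [← h]
      refine Finset.sum_congr rfl fun i _ => ?_
      push_cast; ring_nf
    rw [h2, hcast]
    norm_num
  have tbound : ∑ i ∈ Finset.range (k-1), (((i:ℝ)+2)^pp - ((i:ℝ)+1)^pp)
      ≤ ∑ i ∈ Finset.range (k-1), pp * ((i:ℝ)+2)^(pp-1) := by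
    refine Finset.sum_le_sum fun i _ => ?_
    have hre : (i:ℝ)+2 = ((i:ℝ)+1)+1 := by ring
    rw [hre]
    exact aux_mvt (by positivity) hp
  have hre : ∑ m ∈ Finset.Icc 1 (k-1), (if (m:ℝ) < y then pp * ((m:ℝ)+1)^(pp-1) else 0)
      = ∑ i ∈ Finset.range (k-1), pp * ((i:ℝ)+2)^(pp-1) := by
    rw [← Finset.Ico_add_one_right_eq_Icc, Finset.sum_Ico_eq_sum_range]
    have hkk : k - 1 + 1 - 1 = k - 1 := by omega
    rw [hkk]
    refine Finset.sum_congr rfl fun i hi => ?_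
    have him : 1 + i < k := by
      have := Finset.mem_range.mp hi; omega
    have hlt : ((1+i:ℕ):ℝ) < y := by
      rw [hkdef] at him
      exact_mod_cast Nat.lt_ceil.mp him
    rw [if_pos hlt]
    push_cast; ring_nf
  have hsub : ∑ m ∈ Finset.Icc 1 (k-1), (if (m:ℝ) < y then pp * ((m:ℝ)+1)^(pp-1) else 0)
      ≤ ∑ m ∈ Finset.Icc 1 M, (if (m:ℝ) < y then pp * ((m:ℝ)+1)^(pp-1) else 0) := by
    refine Finset.sum_le_sum_of_subset_of_nonneg ?_ (fun m hm _ => hnn m hm)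
    exact Finset.Icc_subset_Icc le_rfl (by omega)
  calc y ^ pp ≤ (k:ℝ)^pp := step1
    _ = 1 + ((k:ℝ)^pp - 1) := by ring
    _ ≤ 1 + ∑ m ∈ Finset.Icc 1 M, (if (m:ℝ) < y then pp * ((m:ℝ)+1)^(pp-1) else 0) := by
        rw [← tele]
        linarith [tbound.trans (le_of_eq hre.symm) |>.trans hsub]

namespace auxsup

variable {p : ℕ}

lemma ev_le_norm (f : ZeroAtInftyContinuousMap (Epar p) ℝ) (u : Epar p) : f u ≤ ‖f‖ := by
  have h1 : ‖f.toBCF u‖ ≤ ‖f.toBCF‖ := BoundedContinuousFunction.norm_coe_le_norm f.toBCF u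
  rw [ZeroAtInftyContinuousMap.norm_toBCF_eq_norm] at h1
  calc f u ≤ ‖f u‖ := le_abs_self _
    _ = ‖f.toBCF u‖ := rfl
    _ ≤ ‖f‖ := h1

lemma bdd (f : ZeroAtInftyContinuousMap (Epar p) ℝ) (K : Epar p → Prop) :
    BddAbove (Set.range fun u : {u // K u} => f u) := by
  refine ⟨‖f‖, ?_⟩
  rintro x ⟨u, rfl⟩
  exact ev_le_norm f u

lemma sup_cont (K : Epar p → Prop) :
    Continuous (fun f : ZeroAtInftyContinuousMap (Epar p) ℝ => ⨆ u : {u // K u}, f u) := by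
  by_cases hne : Nonempty {u // K u}
  · have key : ∀ f g : ZeroAtInftyContinuousMap (Epar p) ℝ,
        (⨆ u : {u // K u}, f u) ≤ (⨆ u : {u // K u}, g u) + dist f g := by
      intro f g
      refine ciSup_le fun u => ?_
      have h1 : g (u : Epar p) ≤ ⨆ u : {u // K u}, g u := le_ciSup (bdd g K) u
      have h2 : f (u : Epar p) - g (u : Epar p) ≤ dist f g := by
        have h3 : (f - g) (u : Epar p) ≤ ‖f - g‖ := ev_le_norm (f - g) u
        simp only [ZeroAtInftyContinuousMap.coe_sub, Pi.sub_apply] at h3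
        rwa [dist_eq_norm]
      linarith
    have hlip : LipschitzWith 1 (fun f : ZeroAtInftyContinuousMap (Epar p) ℝ =>
        ⨆ u : {u // K u}, f u) := by
      refine LipschitzWith.of_dist_le_mul fun f g => ?_
      rw [Real.dist_eq, NNReal.coe_one, one_mul]
      rw [abs_sub_le_iff]
      constructor
      · linarith [key f g, dist_comm f g]
      · linarith [key g f, dist_comm f g]
    exact hlip.continuous
  · have h0 : (fun f : ZeroAtInftyContinuousMap (Epar p) ℝ => ⨆ u : {u // K u}, f u)
        = fun _ => 0 := by
      funext f
      rw [not_nonempty_iff] at hne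
      exact Real.iSup_of_isEmpty _
    rw [h0]
    exact continuous_const

lemma sup_meas (K : Epar p → Prop) :
    Measurable (fun f : ZeroAtInftyContinuousMap (Epar p) ℝ => ⨆ u : {u // K u}, f u) := by
  haveI : BorelSpace (ZeroAtInftyContinuousMap (Epar p) ℝ) := ⟨rfl⟩
  exact (sup_cont K).measurable

end auxsup

/-- The key event inclusion. -/
lemma aux_incl {Ω : Type*} {p : ℕ} (Θ : Set (Epar p)) (θs : Epar p) (hθs : θs ∈ Θ)
    (a : ℝ → (Epar p ≃L[ℝ] Epar p)) (Z : ℝ → Ω → ZeroAtInftyContinuousMap (Epar p) ℝ)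
    (H : ℝ → Ω → Epar p → ℝ) (T : ℝ) (ω' : Ω) (m : ℕ)
    (hZeqT : ∀ u, θs + a T u ∈ Θ → Z T ω' u = Real.exp (H T ω' (θs + a T u) - H T ω' θs))
    (hHcontT : ContinuousOn (H T ω') (closure Θ))
    (hsupp : HasCompactSupport ⇑(Z T ω'))
    (θhatv : Epar p) (hmem : θhatv ∈ closure Θ)
    (hmax : ∀ θ ∈ closure Θ, H T ω' θ ≤ H T ω' (θhatv))
    (εv : ℝ) (hεv : εv ≤ 1)
    (hnorm : (m:ℝ) < ‖(a T).symm (θhatv - θs)‖) :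
    εv ≤ ⨆ u : {u : Epar p // θs + a T u ∈ Θ ∧ (m:ℝ) ≤ ‖u‖}, Z T ω' u := by
  obtain ⟨θk, hθkΘ, hθklim⟩ := mem_closure_iff_seq_limit.mp hmem
  set uk : ℕ → Epar p := fun k => (a T).symm (θk k - θs) with huk_def
  set u0 : Epar p := (a T).symm (θhatv - θs) with hu0_def
  have huk : Tendsto uk atTop (𝓝 u0) := by
    have h1 : Tendsto (fun k => θk k - θs) atTop (𝓝 (θhatv - θs)) :=
      hθklim.sub tendsto_const_nhds
    exact ((a T).symm.continuous.tendsto _).comp h1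
  have hmemk : ∀ k, θs + a T (uk k) = θk k := by
    intro k
    simp only [huk_def, (a T).apply_symm_apply]
    abel
  have hevnorm : ∀ᶠ k in atTop, (m:ℝ) < ‖uk k‖ :=
    (huk.norm).eventually (eventually_gt_nhds hnorm)
  have hZuk : ∀ k, Z T ω' (uk k) = Real.exp (H T ω' (θk k) - H T ω' θs) := by
    intro k
    rw [hZeqT (uk k) (by rw [hmemk k]; exact hθkΘ k), hmemk k]
  have hHlim : Tendsto (fun k => H T ω' (θk k)) atTop (𝓝 (H T ω' θhatv)) := by
    have hin : Tendsto θk atTop (𝓝[closure Θ] θhatv) :=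
      tendsto_nhdsWithin_iff.mpr ⟨hθklim,
        Filter.Eventually.of_forall fun k => subset_closure (hθkΘ k)⟩
    exact (hHcontT θhatv hmem).tendsto.comp hin
  have hZlim : Tendsto (fun k => Z T ω' (uk k)) atTop
      (𝓝 (Real.exp (H T ω' θhatv - H T ω' θs))) := by
    have hsub : Tendsto (fun k => H T ω' (θk k) - H T ω' θs) atTop
        (𝓝 (H T ω' θhatv - H T ω' θs)) := hHlim.sub tendsto_const_nhds
    have h := (Real.continuous_exp.tendsto (H T ω' θhatv - H T ω' θs)).comp hsub
    refine Tendsto.congr (fun k => ?_) h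
    rw [hZuk k]
    rfl
  have hbdd : BddAbove (Set.range fun u : {u : Epar p // θs + a T u ∈ Θ ∧ (m:ℝ) ≤ ‖u‖}
      => Z T ω' u) := by
    obtain ⟨C, hC⟩ := (Z T ω').continuous.bddAbove_range_of_hasCompactSupport hsupp
    refine ⟨C, ?_⟩
    rintro x ⟨u, rfl⟩
    exact hC (Set.mem_range_self _)
  have hlimle : Real.exp (H T ω' θhatv - H T ω' θs)
      ≤ ⨆ u : {u : Epar p // θs + a T u ∈ Θ ∧ (m:ℝ) ≤ ‖u‖}, Z T ω' u := by
    refine le_of_tendsto hZlim ?_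
    filter_upwards [hevnorm] with k hk
    exact le_ciSup hbdd ⟨uk k, by rw [hmemk k]; exact hθkΘ k, hk.le⟩
  have h1le : (1:ℝ) ≤ Real.exp (H T ω' θhatv - H T ω' θs) :=
    Real.one_le_exp (sub_nonneg.mpr (hmax θs (subset_closure hθs)))
  linarith

lemma aux_summable {pp LL : ℝ} (hp : 1 ≤ pp) (hpL : pp < LL) (v : ℝ) (hv : 0 ≤ v)
    (ind : ℕ → ℝ) (hind : ∀ᶠ r in atTop, ind r = 0) :
    Summable (fun r : ℕ => ((r:ℝ)+2)^(pp-1) * (ind r + v * ((r:ℝ)+1)^(-LL))) := by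
  have h1 : Summable (fun r : ℕ => ((r:ℝ)+2)^(pp-1) * ind r) := by
    obtain ⟨N, hN⟩ := eventually_atTop.mp hind
    rw [← summable_nat_add_iff N]
    refine summable_zero.congr fun n => ?_
    rw [hN (n+N) (by omega)]
    ring
  have h2 : Summable (fun r : ℕ => ((r:ℝ)+1)^(pp-1-LL)) := by
    have h := (Real.summable_nat_rpow (p := pp-1-LL)).mpr (by linarith)
    have h3 := h.comp_injective (add_left_injective 1)
    refine h3.congr fun n => ?_
    show (((n+1:ℕ):ℝ))^(pp-1-LL) = ((n:ℝ)+1)^(pp-1-LL)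
    push_cast
    ring_nf
  have h4 : Summable (fun r : ℕ => ((r:ℝ)+2)^(pp-1) * (v * ((r:ℝ)+1)^(-LL))) := by
    refine Summable.of_nonneg_of_le (fun r => by positivity) (fun r => ?_)
      ((h2.mul_left (v * 2^(pp-1))))
    have hp1 : (0:ℝ) < (r:ℝ)+1 := by positivity
    have hrp : ((r:ℝ)+2)^(pp-1) ≤ 2^(pp-1) * ((r:ℝ)+1)^(pp-1) := by
      rw [← Real.mul_rpow (by norm_num) hp1.le]
      exact Real.rpow_le_rpow (by positivity) (by linarith) (by linarith)
    calc ((r:ℝ)+2)^(pp-1) * (v * ((r:ℝ)+1)^(-LL))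
        ≤ (2^(pp-1) * ((r:ℝ)+1)^(pp-1)) * (v * ((r:ℝ)+1)^(-LL)) := by
          refine mul_le_mul_of_nonneg_right hrp (by positivity)
      _ = (v * 2^(pp-1)) * (((r:ℝ)+1)^(pp-1) * ((r:ℝ)+1)^(-LL)) := by ring
      _ = (v * 2^(pp-1)) * ((r:ℝ)+1)^(pp-1-LL) := by
          rw [← Real.rpow_add hp1]
          ring_nf
  refine (h1.add h4).congr fun r => ?_
  ring

lemma aux_reindex (f : ℕ → ℝ) (M : ℕ) :
    ∑ m ∈ Finset.Icc 1 M, f m = ∑ r ∈ Finset.range M, f (r+1) := by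
  rw [← Finset.Ico_add_one_right_eq_Icc, Finset.sum_Ico_eq_sum_range]
  refine Finset.sum_congr (by norm_num) fun i _ => by rw [Nat.add_comm]


/-- **Moment bound for the QMLE under truncation**: under [A1] with exponent `L`,
for `1 ≤ p' < L` (and `p' > q ∨ 1` for a given `q > 0`), almost surely for all `T ∈ 𝒯`,
`E_𝓒[|û_T|^{p'} Ψ_T] ≤ 1 + p' Σ_{r≥1} (r+1)^{p'-1} (1_{ε(r)>1} + V_L r^{-L}) =: V`,
and `V` is almost surely finite. -/
theorem stmt17
    {Ω : Type*} (𝓒 𝓖 : MeasurableSpace Ω) [inst𝓕 : MeasurableSpace Ω]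
    (P : Measure Ω) [IsProbabilityMeasure P] (h𝓒𝓖 : 𝓒 ≤ 𝓖) (h𝓖𝓕 : 𝓖 ≤ inst𝓕)
    {p : ℕ} (Θ : Set (Epar p)) (hΘo : IsOpen Θ) (hΘb : Bornology.IsBounded Θ)
    (θs : Epar p) (hθs : θs ∈ Θ)
    (𝕋 : Set ℝ) (h𝕋 : 𝕋 ⊆ Set.Ici (0 : ℝ)) (h𝕋top : ¬ BddAbove 𝕋)
    (T₀ : ℝ) (hT₀ : 0 < T₀)
    (H : ℝ → Ω → Epar p → ℝ)
    (hHmeas : ∀ T, Measurable (Function.uncurry (H T)))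
    (hHcont : ∀ T ω, ContinuousOn (H T ω) (closure Θ))
    (a : ℝ → (Epar p ≃L[ℝ] Epar p))
    (ha : Tendsto (fun T => ‖((a T : Epar p →L[ℝ] Epar p))‖) (atTop ⊓ 𝓟 𝕋) (𝓝 0))
    (Z : ℝ → Ω → ZeroAtInftyContinuousMap (Epar p) ℝ)
    (hZmeas : ∀ T, Measurable (Z T))
    (hZeq : ∀ T ∈ 𝕋, ∀ ω u, θs + a T u ∈ Θ →
      Z T ω u = Real.exp (H T ω (θs + a T u) - H T ω θs))
    (hZsupp : ∀ T ω, HasCompactSupport ⇑(Z T ω))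
    (Ψ : ℝ → Ω → ℝ)
    (hΨmeas : ∀ T, Measurable[𝓒] (Ψ T))
    (hΨ01 : ∀ T ω, Ψ T ω ∈ Set.Icc (0 : ℝ) 1)
    -- the exponents: q > 0 and 1 ≤ p' < L with p' > q ∨ 1
    (q L p' : ℝ) (hq : 0 < q) (hp'1 : 1 ≤ p') (hp'L : p' < L) (hp'q : max q 1 < p')
    -- [A1] with the bounding 𝓒-measurable variable V_L
    (ε : ℕ → Ω → ℝ) (hεmeas : ∀ r, Measurable[𝓒] (ε r)) (hεpos : ∀ r ω, 0 < ε r ω)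
    (hε0 : ∀ᵐ ω ∂P, Tendsto (fun r => ε r ω) atTop (𝓝 0))
    (VL : Ω → ℝ) (hVLmeas : Measurable[𝓒] VL)
    (hA1 : ∀ s : ℕ → ℝ, IsTScheme 𝕋 T₀ s →
      ∀ᵐ ω ∂P, ∀ (n : ℕ) (r : ℕ),
        (r : ℝ) ^ L * condProb P 𝓒 (Sevent Θ θs a Z (s n) r (ε r)) ω * Ψ (s n) ω ≤ VL ω)
    -- the QMLE θ̂_T
    (θhat : ℝ → Ω → Epar p) (hθhatmeas : ∀ T, Measurable (θhat T))
    (hθhatmem : ∀ T ω, θhat T ω ∈ closure Θ)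
    (hθhatmax : ∀ T ∈ 𝕋, ∀ ω, ∀ θ ∈ closure Θ, H T ω θ ≤ H T ω (θhat T ω)) :
    -- conclusion: a.s. the series defining V converges, and for all T ∈ 𝒯 the conditional
    -- moment E_𝓒[|û_T|^{p'} Ψ_T] is bounded by V = 1 + p' Σ_{r≥1} (r+1)^{p'-1}
    -- (1_{ε(r)>1} + V_L r^{-L})
    ∀ s : ℕ → ℝ, IsTScheme 𝕋 T₀ s →
      ∀ᵐ ω ∂P,
        Summable (fun r : ℕ => ((r : ℝ) + 2) ^ (p' - 1) *
          (Set.indicator {ω' | 1 < ε (r + 1) ω'} (fun _ => (1 : ℝ)) ω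
            + VL ω * ((r : ℝ) + 1) ^ (-L))) ∧
        ∀ n : ℕ,
          (P[fun ω' => ‖(a (s n)).symm (θhat (s n) ω' - θs)‖ ^ p' * Ψ (s n) ω' | 𝓒]) ω ≤
            1 + p' * ∑' r : ℕ, ((r : ℝ) + 2) ^ (p' - 1) *
              (Set.indicator {ω' | 1 < ε (r + 1) ω'} (fun _ => (1 : ℝ)) ω
                + VL ω * ((r : ℝ) + 1) ^ (-L)) := by
  intro s hs
  have hsT : ∀ n, s n ∈ 𝕋 := hs.1
  have h𝓒 : 𝓒 ≤ inst𝓕 := h𝓒𝓖.trans h𝓖𝓕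
  haveI hfin : IsFiniteMeasure (P.trim h𝓒) := ⟨by
    rw [trim_measurableSet_eq h𝓒 MeasurableSet.univ]
    exact measure_lt_top P _⟩
  have hp'0 : (0:ℝ) < p' := lt_of_lt_of_le one_pos hp'1
  have hL0 : (0:ℝ) < L := lt_trans hp'0 hp'L
  obtain ⟨R, hR⟩ := hΘb.closure.exists_norm_le
  set uh : ℕ → Ω → Epar p := fun n ω => (a (s n)).symm (θhat (s n) ω - θs) with huhdef
  set M : ℕ → ℕ := fun n =>
    ⌈‖((a (s n)).symm : Epar p →L[ℝ] Epar p)‖ * (R + ‖θs‖)⌉₊ with hMdef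
  have huhle : ∀ n ω, ‖uh n ω‖ ≤ (M n : ℝ) := by
    intro n ω
    have h1 : ‖uh n ω‖ ≤ ‖((a (s n)).symm : Epar p →L[ℝ] Epar p)‖ * ‖θhat (s n) ω - θs‖ := by
      have h := ((a (s n)).symm : Epar p →L[ℝ] Epar p).le_opNorm (θhat (s n) ω - θs)
      rw [ContinuousLinearEquiv.coe_coe] at h
      exact h
    have h2 : ‖θhat (s n) ω - θs‖ ≤ R + ‖θs‖ := by
      have h3 := norm_sub_le (θhat (s n) ω) θs
      have h4 := hR _ (hθhatmem (s n) ω)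
      linarith
    calc ‖uh n ω‖ ≤ ‖((a (s n)).symm : Epar p →L[ℝ] Epar p)‖ * ‖θhat (s n) ω - θs‖ := h1
      _ ≤ ‖((a (s n)).symm : Epar p →L[ℝ] Epar p)‖ * (R + ‖θs‖) :=
          mul_le_mul_of_nonneg_left h2 (norm_nonneg _)
      _ ≤ (M n : ℝ) := Nat.le_ceil _
  have huhmeas : ∀ n, Measurable (uh n) := by
    intro n
    have hc : Continuous (fun x : Epar p => (a (s n)).symm (x - θs)) :=
      (a (s n)).symm.continuous.comp (continuous_id.sub continuous_const)
    exact hc.measurable.comp (hθhatmeas (s n))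
  have hnm : ∀ n, Measurable (fun ω => ‖uh n ω‖) := fun n => (huhmeas n).norm
  have hΨF : ∀ n, Measurable (Ψ (s n)) := fun n => (hΨmeas (s n)).mono h𝓒 le_rfl
  set X : ℕ → Ω → ℝ := fun n ω => ‖uh n ω‖ ^ p' * Ψ (s n) ω with hXdef
  set gA : ℕ → ℕ → Ω → ℝ := fun n m ω =>
    Set.indicator {ω' | (m:ℝ) < ‖uh n ω'‖} (fun _ => (1:ℝ)) ω * Ψ (s n) ω with hgAdef
  set gS : ℕ → ℕ → Ω → ℝ := fun n m =>
    Ψ (s n) * Set.indicator (Sevent Θ θs a Z (s n) m (ε m)) (fun _ => (1:ℝ)) with hgSdef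
  set gE : ℕ → Ω → ℝ := fun m =>
    Set.indicator {ω' | 1 < ε m ω'} (fun _ => (1:ℝ)) with hgEdef
  set c : ℕ → ℝ := fun m => p' * ((m:ℝ)+1)^(p'-1) with hcdef
  set F : ℕ → Ω → ℝ := fun n =>
    (fun _ => (1:ℝ)) + ∑ m ∈ Finset.Icc 1 (M n), c m • gA n m with hFdef
  have hAset : ∀ n m, MeasurableSet {ω' | (m:ℝ) < ‖uh n ω'‖} := fun n m =>
    measurableSet_lt measurable_const (hnm n)
  have hSset : ∀ n m, MeasurableSet (Sevent Θ θs a Z (s n) m (ε m)) := by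
    intro n m
    have hsup : Measurable (fun ω =>
        ⨆ u : {u : Epar p // θs + a (s n) u ∈ Θ ∧ (m:ℝ) ≤ ‖u‖}, Z (s n) ω u) :=
      (auxsup.sup_meas _).comp (hZmeas (s n))
    exact measurableSet_le ((hεmeas m).mono h𝓒 le_rfl) hsup
  have hEset : ∀ m, MeasurableSet[𝓒] {ω' | 1 < ε m ω'} := fun m =>
    measurableSet_lt measurable_const (hεmeas m)
  have hbint : ∀ (f : Ω → ℝ) (C0 : ℝ), Measurable f → (∀ ω, ‖f ω‖ ≤ C0) →
      Integrable f P := fun f C0 hf hb =>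
    ⟨hf.aestronglyMeasurable, HasFiniteIntegral.of_bounded (C := C0) (ae_of_all _ hb)⟩
  have hΨb : ∀ n ω, ‖Ψ (s n) ω‖ ≤ 1 := by
    intro n ω
    have h := hΨ01 (s n) ω
    rw [Real.norm_eq_abs, abs_le]
    exact ⟨by linarith [h.1], h.2⟩
  have hindb : ∀ (A : Set Ω) (ω : Ω), ‖Set.indicator A (fun _ => (1:ℝ)) ω‖ ≤ 1 := by
    intro A ω
    by_cases h : ω ∈ A <;> simp [Set.indicator_apply, h]
  have hXint : ∀ n, Integrable (X n) P := by
    intro n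
    refine hbint _ ((M n : ℝ) ^ p') ?_ ?_
    · exact ((Real.continuous_rpow_const (by linarith)).measurable.comp (hnm n)).mul (hΨF n)
    · intro ω
      have h1 : ‖uh n ω‖ ^ p' ≤ (M n : ℝ) ^ p' :=
        Real.rpow_le_rpow (norm_nonneg _) (huhle n ω) (by linarith)
      have h2 : (0:ℝ) ≤ ‖uh n ω‖ ^ p' := Real.rpow_nonneg (norm_nonneg _) _
      have h3 := hΨb n ω
      rw [Real.norm_eq_abs] at h3
      show ‖‖uh n ω‖ ^ p' * Ψ (s n) ω‖ ≤ (M n : ℝ) ^ p'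
      rw [Real.norm_eq_abs, abs_mul, abs_of_nonneg h2]
      calc ‖uh n ω‖ ^ p' * |Ψ (s n) ω| ≤ ‖uh n ω‖ ^ p' * 1 :=
            mul_le_mul_of_nonneg_left h3 h2
        _ = ‖uh n ω‖ ^ p' := mul_one _
        _ ≤ (M n : ℝ) ^ p' := h1
  have hgAint : ∀ n m, Integrable (gA n m) P := by
    intro n m
    refine hbint _ 1 ((measurable_const.indicator (hAset n m)).mul (hΨF n)) fun ω => ?_
    calc ‖gA n m ω‖ ≤ ‖Set.indicator {ω' | (m:ℝ) < ‖uh n ω'‖} (fun _ => (1:ℝ)) ω‖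
          * ‖Ψ (s n) ω‖ := norm_mul_le _ _
      _ ≤ 1 * 1 := mul_le_mul (hindb _ ω) (hΨb n ω) (norm_nonneg _) zero_le_one
      _ = 1 := one_mul 1
  have hgSint : ∀ n m, Integrable (gS n m) P := by
    intro n m
    refine hbint _ 1 ((hΨF n).mul (measurable_const.indicator (hSset n m))) fun ω => ?_
    calc ‖gS n m ω‖ ≤ ‖Ψ (s n) ω‖ *
          ‖Set.indicator (Sevent Θ θs a Z (s n) m (ε m)) (fun _ => (1:ℝ)) ω‖ :=
        norm_mul_le _ _
      _ ≤ 1 * 1 := mul_le_mul (hΨb n ω) (hindb _ ω) (norm_nonneg _) zero_le_one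
      _ = 1 := one_mul 1
  have hgEint : ∀ m, Integrable (gE m) P := fun m =>
    hbint _ 1 (measurable_const.indicator (h𝓒 _ (hEset m))) fun ω => hindb _ ω
  have hFint : ∀ n, Integrable (F n) P := fun n =>
    (integrable_const 1).add
      (integrable_finset_sum' _ fun m _ => (hgAint n m).smul (c m))
  have hpt1 : ∀ n ω, X n ω ≤ F n ω := by
    intro n ω
    have hΨ := hΨ01 (s n) ω
    have hlayer := aux_layer hp'1 ‖uh n ω‖ (M n) (norm_nonneg _) (huhle n ω)
    have hterm : ∀ m : ℕ,
        (if (m:ℝ) < ‖uh n ω‖ then p' * ((m:ℝ)+1)^(p'-1) else 0) * Ψ (s n) ω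
        = (c m • gA n m) ω := by
      intro m
      by_cases h : (m:ℝ) < ‖uh n ω‖
      · simp only [hgAdef, hcdef, Pi.smul_apply, smul_eq_mul, if_pos h,
          Set.indicator_of_mem (show ω ∈ {ω' | (m:ℝ) < ‖uh n ω'‖} from h)]
        ring
      · simp only [hgAdef, hcdef, Pi.smul_apply, smul_eq_mul, if_neg h,
          Set.indicator_of_notMem (show ω ∉ {ω' | (m:ℝ) < ‖uh n ω'‖} from h)]
        ring
    calc X n ω ≤ (1 + ∑ m ∈ Finset.Icc 1 (M n),
          (if (m:ℝ) < ‖uh n ω‖ then p' * ((m:ℝ)+1)^(p'-1) else 0)) * Ψ (s n) ω :=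
        mul_le_mul_of_nonneg_right hlayer hΨ.1
      _ = Ψ (s n) ω + ∑ m ∈ Finset.Icc 1 (M n),
          ((if (m:ℝ) < ‖uh n ω‖ then p' * ((m:ℝ)+1)^(p'-1) else 0) * Ψ (s n) ω) := by
        rw [add_mul, one_mul, Finset.sum_mul]
      _ = Ψ (s n) ω + ∑ m ∈ Finset.Icc 1 (M n), (c m • gA n m) ω := by
        rw [Finset.sum_congr rfl fun m _ => hterm m]
      _ ≤ 1 + ∑ m ∈ Finset.Icc 1 (M n), (c m • gA n m) ω := add_le_add_left hΨ.2 _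
      _ = F n ω := by
        simp only [hFdef, Pi.add_apply, Finset.sum_apply]
  have hpt2 : ∀ n m ω, gA n m ω ≤ gS n m ω + gE m ω := by
    intro n m ω
    have hΨ := hΨ01 (s n) ω
    have hgS0 : 0 ≤ gS n m ω :=
      mul_nonneg hΨ.1 (Set.indicator_nonneg (fun _ _ => zero_le_one) ω)
    have hgE0 : 0 ≤ gE m ω := Set.indicator_nonneg (fun _ _ => zero_le_one) ω
    by_cases hA : (m:ℝ) < ‖uh n ω‖
    · have hgA : gA n m ω = Ψ (s n) ω := by
        show Set.indicator {ω' | (m:ℝ) < ‖uh n ω'‖} (fun _ => (1:ℝ)) ω * Ψ (s n) ω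
          = Ψ (s n) ω
        rw [Set.indicator_of_mem (show ω ∈ {ω' | (m:ℝ) < ‖uh n ω'‖} from hA), one_mul]
      by_cases hE : 1 < ε m ω
      · have hgE : gE m ω = 1 := by
          show Set.indicator {ω' | 1 < ε m ω'} (fun _ => (1:ℝ)) ω = 1
          rw [Set.indicator_of_mem (show ω ∈ {ω' | 1 < ε m ω'} from hE)]
        rw [hgA, hgE]
        linarith [hΨ.2]
      · push_neg at hE
        have hin : ω ∈ Sevent Θ θs a Z (s n) m (ε m) := by
          show ε m ω ≤ ⨆ u : {u : Epar p // θs + a (s n) u ∈ Θ ∧ (m:ℝ) ≤ ‖u‖}, Z (s n) ω u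
          exact aux_incl Θ θs hθs a Z H (s n) ω m
            (fun u hu => hZeq (s n) (hsT n) ω u hu) (hHcont (s n) ω) (hZsupp (s n) ω)
            (θhat (s n) ω) (hθhatmem (s n) ω)
            (fun θ hθ => hθhatmax (s n) (hsT n) ω θ hθ) (ε m ω) hE hA
        have hgS : gS n m ω = Ψ (s n) ω := by
          show Ψ (s n) ω * Set.indicator (Sevent Θ θs a Z (s n) m (ε m)) (fun _ => (1:ℝ)) ω
            = Ψ (s n) ω
          rw [Set.indicator_of_mem hin, mul_one]
        rw [hgA, hgS]
        linarith
    · have hgA : gA n m ω = 0 := by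
        show Set.indicator {ω' | (m:ℝ) < ‖uh n ω'‖} (fun _ => (1:ℝ)) ω * Ψ (s n) ω = 0
        rw [Set.indicator_of_notMem (show ω ∉ {ω' | (m:ℝ) < ‖uh n ω'‖} from hA), zero_mul]
      rw [hgA]
      linarith
  have haeA1 := hA1 s hs
  have haeVL : ∀ᵐ ω ∂P, 0 ≤ VL ω := by
    filter_upwards [haeA1] with ω hω
    have h := hω 0 0
    have h0 : ((0:ℕ):ℝ)^L = 0 := by
      rw [Nat.cast_zero, Real.zero_rpow hL0.ne']
    rw [h0, zero_mul, zero_mul] at h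
    exact h
  have haecp : ∀ᵐ ω ∂P, ∀ n m : ℕ, 1 ≤ m →
      Ψ (s n) ω * condProb P 𝓒 (Sevent Θ θs a Z (s n) m (ε m)) ω
        ≤ VL ω * (m:ℝ)^(-L) := by
    filter_upwards [haeA1] with ω hω n m hm
    have h := hω n m
    have hmp : (0:ℝ) < (m:ℝ) := by exact_mod_cast hm
    have hpow : (0:ℝ) < (m:ℝ)^L := Real.rpow_pos_of_pos hmp L
    have h2 : condProb P 𝓒 (Sevent Θ θs a Z (s n) m (ε m)) ω * Ψ (s n) ω
        ≤ VL ω / (m:ℝ)^L := by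
      rw [le_div_iff₀ hpow]
      calc condProb P 𝓒 (Sevent Θ θs a Z (s n) m (ε m)) ω * Ψ (s n) ω * (m:ℝ)^L
          = (m:ℝ)^L * condProb P 𝓒 (Sevent Θ θs a Z (s n) m (ε m)) ω * Ψ (s n) ω := by
            ring
        _ ≤ VL ω := h
    rw [Real.rpow_neg hmp.le, ← div_eq_mul_inv, mul_comm]
    exact h2
  have haeX : ∀ᵐ ω ∂P, ∀ n, (P[X n|𝓒]) ω ≤ (P[F n|𝓒]) ω := by
    rw [ae_all_iff]
    exact fun n => condExp_mono (hXint n) (hFint n) (ae_of_all _ (hpt1 n))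
  have haeF : ∀ᵐ ω ∂P, ∀ n,
      (P[F n|𝓒]) ω = 1 + ∑ m ∈ Finset.Icc 1 (M n), c m * (P[gA n m|𝓒]) ω := by
    rw [ae_all_iff]
    intro n
    have h1 : P[F n|𝓒] =ᵐ[P] P[(fun _ => (1:ℝ))|𝓒]
        + P[∑ m ∈ Finset.Icc 1 (M n), c m • gA n m|𝓒] :=
      condExp_add (integrable_const 1)
        (integrable_finset_sum' _ fun m _ => (hgAint n m).smul (c m)) 𝓒
    have h2 : P[(fun _ => (1:ℝ))|𝓒] = fun _ => (1:ℝ) := condExp_const h𝓒 1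
    have h3 : P[∑ m ∈ Finset.Icc 1 (M n), c m • gA n m|𝓒]
        =ᵐ[P] ∑ m ∈ Finset.Icc 1 (M n), P[c m • gA n m|𝓒] :=
      condExp_finset_sum (fun m _ => (hgAint n m).smul (c m)) 𝓒
    have h4 : ∀ᵐ ω ∂P, ∀ m : ℕ, (P[c m • gA n m|𝓒]) ω = c m * (P[gA n m|𝓒]) ω := by
      rw [ae_all_iff]
      intro m
      filter_upwards [condExp_smul (μ := P) (m := 𝓒) (c m) (gA n m)] with ω hω
      rw [hω, Pi.smul_apply, smul_eq_mul]
    filter_upwards [h1, h3, h4] with ω e1 e3 e4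
    calc (P[F n|𝓒]) ω
        = (P[(fun _ => (1:ℝ))|𝓒]) ω
          + (P[∑ m ∈ Finset.Icc 1 (M n), c m • gA n m|𝓒]) ω := by rw [e1]; rfl
      _ = 1 + ∑ m ∈ Finset.Icc 1 (M n), (P[c m • gA n m|𝓒]) ω := by
          rw [h2, e3, Finset.sum_apply]
      _ = 1 + ∑ m ∈ Finset.Icc 1 (M n), c m * (P[gA n m|𝓒]) ω := by
          congr 1
          exact Finset.sum_congr rfl fun m _ => e4 m
  have haegA : ∀ᵐ ω ∂P, ∀ n m : ℕ, 1 ≤ m →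
      (P[gA n m|𝓒]) ω ≤ gE m ω + VL ω * (m:ℝ)^(-L) := by
    rw [ae_all_iff]
    intro n
    rw [ae_all_iff]
    intro m
    by_cases hm : 1 ≤ m
    swap
    · exact ae_of_all _ fun ω h => absurd h hm
    have h5 : P[gA n m|𝓒] ≤ᵐ[P] P[gS n m + gE m|𝓒] :=
      condExp_mono (hgAint n m) ((hgSint n m).add (hgEint m))
        (ae_of_all _ fun ω => hpt2 n m ω)
    have h6 : P[gS n m + gE m|𝓒] =ᵐ[P] P[gS n m|𝓒] + P[gE m|𝓒] :=
      condExp_add (hgSint n m) (hgEint m) 𝓒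
    have h7 : P[gS n m|𝓒] =ᵐ[P] Ψ (s n)
        * P[Set.indicator (Sevent Θ θs a Z (s n) m (ε m)) (fun _ => (1:ℝ))|𝓒] :=
      condExp_mul_of_stronglyMeasurable_left ((hΨmeas (s n)).stronglyMeasurable)
        (hgSint n m)
        (hbint _ 1 (measurable_const.indicator (hSset n m)) fun ω => hindb _ ω)
    have h8 : P[gE m|𝓒] = gE m :=
      condExp_of_stronglyMeasurable h𝓒
        (stronglyMeasurable_const.indicator (hEset m)) (hgEint m)
    filter_upwards [h5, h6, h7, haecp] with ω e5 e6 e7 ecp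
    intro _
    have e7' : (P[gS n m|𝓒]) ω
        = Ψ (s n) ω * condProb P 𝓒 (Sevent Θ θs a Z (s n) m (ε m)) ω := e7
    have ecp' := ecp n m hm
    calc (P[gA n m|𝓒]) ω ≤ (P[gS n m + gE m|𝓒]) ω := e5
      _ = (P[gS n m|𝓒]) ω + (P[gE m|𝓒]) ω := e6
      _ = Ψ (s n) ω * condProb P 𝓒 (Sevent Θ θs a Z (s n) m (ε m)) ω + gE m ω := by
          rw [e7', h8]
      _ ≤ VL ω * (m:ℝ)^(-L) + gE m ω := add_le_add_left ecp' _
      _ = gE m ω + VL ω * (m:ℝ)^(-L) := by ring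
  filter_upwards [haeX, haeF, haegA, haeVL, hε0] with ω eX eF egA eVL eε
  have hsummable : Summable (fun r : ℕ => ((r:ℝ)+2)^(p'-1) *
      (gE (r+1) ω + VL ω * ((r:ℝ)+1)^(-L))) := by
    refine aux_summable hp'1 hp'L (VL ω) eVL (fun r => gE (r+1) ω) ?_
    have hev : ∀ᶠ k in atTop, ε k ω < 1 := eε.eventually (eventually_lt_nhds one_pos)
    obtain ⟨N, hN⟩ := eventually_atTop.mp hev
    refine eventually_atTop.mpr ⟨N, fun r hr => ?_⟩
    have hnot : ω ∉ {ω' | 1 < ε (r+1) ω'} := by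
      simp only [Set.mem_setOf_eq, not_lt]
      exact (hN (r+1) (by omega)).le
    exact Set.indicator_of_notMem hnot _
  constructor
  · exact hsummable
  · intro n
    have hnn : ∀ r : ℕ, 0 ≤ ((r:ℝ)+2)^(p'-1) * (gE (r+1) ω + VL ω * ((r:ℝ)+1)^(-L)) := by
      intro r
      have h1 : 0 ≤ gE (r+1) ω := Set.indicator_nonneg (fun _ _ => zero_le_one) ω
      have h2 : (0:ℝ) ≤ ((r:ℝ)+1)^(-L) := Real.rpow_nonneg (by positivity) _
      have h3 : (0:ℝ) ≤ ((r:ℝ)+2)^(p'-1) := Real.rpow_nonneg (by positivity) _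
      have h4 : 0 ≤ VL ω * ((r:ℝ)+1)^(-L) := mul_nonneg eVL h2
      positivity
    have hstep : ∑ m ∈ Finset.Icc 1 (M n),
        ((m:ℝ)+1)^(p'-1) * (gE m ω + VL ω * (m:ℝ)^(-L))
        ≤ ∑' r : ℕ, ((r:ℝ)+2)^(p'-1) * (gE (r+1) ω + VL ω * ((r:ℝ)+1)^(-L)) := by
      have hridx : ∑ m ∈ Finset.Icc 1 (M n),
          ((m:ℝ)+1)^(p'-1) * (gE m ω + VL ω * (m:ℝ)^(-L))
          = ∑ r ∈ Finset.range (M n),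
            ((r:ℝ)+2)^(p'-1) * (gE (r+1) ω + VL ω * ((r:ℝ)+1)^(-L)) := by
        rw [aux_reindex (fun m => ((m:ℝ)+1)^(p'-1) * (gE m ω + VL ω * (m:ℝ)^(-L))) (M n)]
        refine Finset.sum_congr rfl fun r _ => ?_
        have hc1 : ((r+1:ℕ):ℝ) = (r:ℝ)+1 := by push_cast; ring
        rw [hc1]
        have hc2 : (r:ℝ)+1+1 = (r:ℝ)+2 := by ring
        rw [hc2]
      rw [hridx]
      exact hsummable.sum_le_tsum _ (fun r _ => hnn r)
    calc (P[X n|𝓒]) ω ≤ (P[F n|𝓒]) ω := eX n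
      _ = 1 + ∑ m ∈ Finset.Icc 1 (M n), c m * (P[gA n m|𝓒]) ω := eF n
      _ ≤ 1 + ∑ m ∈ Finset.Icc 1 (M n), c m * (gE m ω + VL ω * (m:ℝ)^(-L)) := by
          refine add_le_add_right (Finset.sum_le_sum fun m hm => ?_) 1
          have hm1 : 1 ≤ m := (Finset.mem_Icc.mp hm).1
          have hc0 : 0 ≤ c m := by
            simp only [hcdef]
            positivity
          exact mul_le_mul_of_nonneg_left (egA n m hm1) hc0
      _ = 1 + p' * ∑ m ∈ Finset.Icc 1 (M n),
            ((m:ℝ)+1)^(p'-1) * (gE m ω + VL ω * (m:ℝ)^(-L)) := by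
          rw [Finset.mul_sum]
          congr 1
          refine Finset.sum_congr rfl fun m _ => ?_
          simp only [hcdef]
          ring
      _ ≤ 1 + p' * ∑' r : ℕ, ((r:ℝ)+2)^(p'-1) *
            (gE (r+1) ω + VL ω * ((r:ℝ)+1)^(-L)) :=
          add_le_add_right (mul_le_mul_of_nonneg_left hstep hp'0.le) 1


end
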